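/- Let δ > 0. There exists σ₀ > 0, depending only on δ, such that the following holds. Let X be a δ-hyperbolic metric space in which, for all x,x' ∈ X and every l > 0, there is a (1,l)-quasi-geodesic joining x to x'; let G act on X by isometries, let σ ≥ σ₀, let R be a σ-rotation family, and let (W,N,V) be an extended windmill with W nonempty and L = ⟨N ∪ K_V⟩. Set A = { v ∈ v(R)∖V : d(v,W) ≤ 3σ/10 }, assume A is nonempty, let S = Hull(W ∪ A), and let L' = ⟨L ∪ K_A⟩. Let m ≥ 0 and let g = h₁·h₂·⋯·h_m·u, where u ∈ L and, for each i ∈ {1,…,m}, there is (H_i, v_i) ∈ R with v_i ∈ A and h_i ∈ H_i∖{1}, and v_i ≠ v_{i+1} for 1 ≤ i ≤ m−1. Then for all y, y' ∈ S there exists a sequence of points y = y₀, y₁, …, y_{m+1} = g·y' in X such that: (i) for all i ∈ {1,…,m+1} there exists g_i ∈ L' with g_i⁻¹·y_{i−1} ∈ S and g_i⁻¹·y_i ∈ S; (ii) for all i ∈ {1,…,m−1}, d(y_{i+1}, y_i) ≥ σ; (iii) for all i, j, k ∈ {1,…,m} with i ≤ j ≤ k, (y_i, y_k)_{y_j} ≤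 110δ; (iv) for every x ∈ X there exists i ∈ {0,…,m} such that (y_{i+1}, y_i)_x ≤ (y, g·y')_x + 218δ. -/
import Mathlib


open Metric

universe u v

/-- The Gromov product `(y,z)_x = (d(y,x)+d(z,x)-d(y,z))/2`. -/
noncomputable def gp {X : Type u} [MetricSpace X] (x y z : X) : ℝ :=
  (dist y x + dist z x - dist y z) / 2

/-- `X` is `δ`-hyperbolic: the four point inequality. -/
def IsHyp (X : Type u) [MetricSpace X] (δ : ℝ) : Prop :=
  ∀ x y z t : X, min (gp t x y) (gp t y z) - δ ≤ gp t x z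

/-- `γ` restricted to `[a,b]` is a `(1,l)`-quasi-geodesic. -/
def IsQG {X : Type u} [MetricSpace X] (l a b : ℝ) (γ : ℝ → X) : Prop :=
  ∀ t ∈ Set.Icc a b, ∀ t' ∈ Set.Icc a b,
    dist (γ t) (γ t') ≤ |t - t'| ∧ |t - t'| ≤ dist (γ t) (γ t') + l

/-- Any two points of `X` are joined by a `(1,l)`-quasi-geodesic, for every `l > 0`. -/
def QGSpace (X : Type u) [MetricSpace X] : Prop :=
  ∀ x x' : X, ∀ l : ℝ, 0 < l →
    ∃ a b : ℝ, ∃ γ : ℝ → X, a ≤ b ∧ IsQG l a b γ ∧ γ a = x ∧ γ b = x'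

/-- `Y` is `α`-quasi-convex. -/
def QConvex {X : Type u} [MetricSpace X] (α : ℝ) (Y : Set X) : Prop :=
  ∀ x : X, ∀ y ∈ Y, ∀ y' ∈ Y, infDist x Y ≤ gp x y y' + α

/-- The hull of `Y`: the union of the images of all `(1,δ)`-quasi-geodesics defined on
compact intervals whose two endpoints lie in `Y`. -/
def hull {X : Type u} [MetricSpace X] (δ : ℝ) (Y : Set X) : Set X :=
  { z | ∃ a b : ℝ, ∃ γ : ℝ → X, a ≤ b ∧ IsQG δ a b γ ∧ γ a ∈ Y ∧ γ b ∈ Y ∧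
      z ∈ γ '' Set.Icc a b }

/-- The `r`-neighborhood of a subset. -/
def nbhd {X : Type u} [MetricSpace X] (r : ℝ) (Z : Set X) : Set X :=
  { x | infDist x Z ≤ r }

/-- A `σ`-rotation family: a nonempty set of pairs (rotation subgroup, apex). -/
def IsRotFam {X : Type u} [MetricSpace X] {G : Type v} [Group G] [MulAction G X]
    (σ : ℝ) (R : Set (Subgroup G × X)) : Prop :=
  R.Nonempty ∧
  (∀ p ∈ R, ∀ x : X, dist x p.2 ≤ σ / 10 → ∀ h ∈ p.1, h ≠ 1 →
      dist (h • x) x = 2 * dist p.2 x) ∧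
  (∀ p ∈ R, ∀ q ∈ R, p ≠ q → σ ≤ dist p.2 q.2) ∧
  (∀ g : G, ∀ p ∈ R, (Subgroup.map (MulAut.conj g).toMonoidHom p.1, g • p.2) ∈ R)

/-- The set of apices of a rotation family. -/
def apices {G : Type v} {X : Type u} [Group G] (R : Set (Subgroup G × X)) : Set X :=
  Prod.snd '' R

/-- The subgroup `K_Y` generated by all rotation subgroups whose apex lies in `Y`. -/
def rotSub {G : Type v} {X : Type u} [Group G] (R : Set (Subgroup G × X)) (Y : Set X) :
    Subgroup G :=
  ⨆ p ∈ { q ∈ R | q.2 ∈ Y }, p.1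

/-- The orbit set `P • Z`. -/
def orbSet {G : Type v} {X : Type u} [Group G] [MulAction G X] (P : Subgroup G)
    (Z : Set X) : Set X :=
  { x | ∃ g ∈ P, ∃ z ∈ Z, x = g • z }

/-- An extended windmill `(W, N, V)` for the rotation family `R`. -/
def IsExtWindmill {X : Type u} [MetricSpace X] {G : Type v} [Group G] [MulAction G X]
    (δ : ℝ) (R : Set (Subgroup G × X)) (W : Set X) (N : Subgroup G) (V : Set X) : Prop :=
  V ⊆ apices R ∧
  QConvex (2 * δ) W ∧
  (∀ g ∈ N ⊔ rotSub R V, ∀ w ∈ W, g • w ∈ W) ∧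
  (∀ g ∈ N ⊔ rotSub R V, ∀ v ∈ V, g • v ∈ V) ∧
  (∀ p ∈ R, p.2 ∉ V → ∀ h ∈ p.1, h ≠ 1 → ∀ x ∈ W, ∀ x' ∈ W,
      gp p.2 x (h • x') ≤ 100 * δ) ∧
  (∀ p ∈ R, p.2 ∉ V → ∀ g ∈ N ⊔ rotSub R V, g • p.2 = p.2 → g = 1)

section AuxLemmas

variable {X : Type u} [MetricSpace X]

theorem gp_nonneg' (x y z : X) : 0 ≤ gp x y z := by
  have h := dist_triangle y x z
  have h2 : dist x z = dist z x := dist_comm _ _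
  simp only [gp]
  linarith

theorem gp_comm' (x y z : X) : gp x y z = gp x z y := by
  simp only [gp]
  rw [dist_comm y z]
  ring

theorem gp_self_right' (x y : X) : gp x y x = 0 := by
  simp only [gp, dist_self]
  ring

theorem gp_self_left' (x z : X) : gp x x z = 0 := by
  simp only [gp, dist_self]
  rw [dist_comm x z]
  ring

theorem gp_le_dist' (x y z : X) : gp x y z ≤ dist y x := by
  have h := dist_triangle z y x
  have h2 : dist y z = dist z y := dist_comm _ _
  simp only [gp]
  linarith

theorem gp_ge' (x y z : X) : dist y x - dist y z ≤ gp x y z := by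
  have h := dist_triangle y z x
  simp only [gp]
  linarith

theorem gp_lip' (x y y' z : X) : gp x y z ≤ gp x y' z + dist y y' := by
  have h1 := dist_triangle y y' x
  have h2 := dist_triangle y' y z
  have e := dist_comm y y'
  simp only [gp]
  linarith

theorem gp_add' (x y z : X) : gp x y z + gp y x z = dist x y := by
  have e1 : dist y x = dist x y := dist_comm _ _
  have e2 : dist z y = dist y z := dist_comm _ _
  have e3 : dist z x = dist x z := dist_comm _ _
  simp only [gp]
  linarith

theorem gp_ident' (x p o q : X) : gp x p q = gp x o q + gp p x o - gp p o q := by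
  have e1 : dist p x = dist x p := dist_comm _ _
  have e2 : dist p q = dist q p := dist_comm _ _
  have e3 : dist o x = dist x o := dist_comm _ _
  simp only [gp]
  linarith

theorem gp_ident2' (v p s q : X) : gp v p s + gp v s q - gp v p q = dist s v - gp s p q := by
  have e1 : dist q s = dist s q := dist_comm _ _
  simp only [gp]
  linarith

theorem gp_small {δ : ℝ} (hyp : IsHyp X δ) {t x y z : X} {s : ℝ}
    (h1 : gp t x y ≤ s) (h2 : s + δ < gp t y z) : gp t x z ≤ s + δ := by
  by_contra hcon
  push_neg at hcon
  have hc : gp t z y = gp t y z := gp_comm' t z y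
  have H := hyp x z y t
  have hm : s + δ < min (gp t x z) (gp t z y) := lt_min hcon (by rw [hc]; exact h2)
  linarith

theorem gp_sp {δ : ℝ} (hδ : 0 < δ) (hyp : IsHyp X δ) {v p q s b : X} {ε : ℝ}
    (hε : 0 ≤ ε) (hspq : gp s p q ≤ ε) :
    gp v s b ≤ max (gp v p b) (gp v q b) + ε + 3 * δ := by
  rcases le_or_gt (gp v s b) (gp v p b + δ) with h1 | h1
  · have := le_max_left (gp v p b) (gp v q b); linarith
  rcases le_or_gt (gp v s b) (gp v q b + δ) with h2 | h2
  · have := le_max_right (gp v p b) (gp v q b); linarith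
  have hps : gp v p s ≤ gp v p b + δ := by
    by_contra hcon
    push_neg at hcon
    have H := hyp p s b v
    have hm : gp v p b + δ < min (gp v p s) (gp v s b) := lt_min hcon h1
    linarith
  have hqs : gp v q s ≤ gp v q b + δ := by
    by_contra hcon
    push_neg at hcon
    have H := hyp q s b v
    have hm : gp v q b + δ < min (gp v q s) (gp v s b) := lt_min hcon h2
    linarith
  have hid := gp_ident2' v p s q
  have hcsq : gp v s q = gp v q s := gp_comm' _ _ _
  have hle : gp v s b ≤ dist s v := gp_le_dist' v s b
  have H4 := hyp p b q v
  have hbq : gp v b q = gp v q b := gp_comm' _ _ _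
  rcases le_total (gp v p b) (gp v q b) with hm | hm
  · have hmax : max (gp v p b) (gp v q b) = gp v q b := max_eq_right hm
    have hmin : min (gp v p b) (gp v b q) = gp v p b := by rw [hbq]; exact min_eq_left hm
    rw [hmax]
    rw [hmin] at H4
    linarith
  · have hmax : max (gp v p b) (gp v q b) = gp v p b := max_eq_left hm
    have hmin : min (gp v p b) (gp v b q) = gp v b q := by rw [hbq]; exact min_eq_right hm
    rw [hmax]
    rw [hmin, hbq] at H4
    linarith

theorem gp_qg {δ : ℝ} {a b : ℝ} {γ : ℝ → X} (hab : a ≤ b) (hqg : IsQG δ a b γ)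
    {θ : ℝ} (hθ : θ ∈ Set.Icc a b) :
    gp (γ θ) (γ a) (γ b) ≤ δ / 2 := by
  obtain ⟨h1, h2⟩ := hθ
  have ha : a ∈ Set.Icc a b := ⟨le_refl a, hab⟩
  have hb : b ∈ Set.Icc a b := ⟨hab, le_refl b⟩
  have e1 := (hqg a ha θ ⟨h1, h2⟩).1
  have e2 := (hqg b hb θ ⟨h1, h2⟩).1
  have e3 := (hqg a ha b hb).2
  rw [abs_of_nonpos (by linarith)] at e1
  rw [abs_of_nonneg (by linarith)] at e2
  rw [abs_of_nonpos (by linarith)] at e3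
  simp only [gp]
  linarith

end AuxLemmas

/-- Discrete quasi-geodesic associated to an element of `L' = ⟨L ∪ K_A⟩`. -/
theorem windmill_pre_quasi_convex (δ : ℝ) (hδ : 0 < δ) :
    ∃ σ₀ : ℝ, 0 < σ₀ ∧
      ∀ (X : Type u) [MetricSpace X] (G : Type v) [Group G] [MulAction G X],
        (∀ g : G, Isometry fun x : X => g • x) →
        IsHyp X δ → QGSpace X →
        ∀ σ : ℝ, σ₀ ≤ σ → ∀ R : Set (Subgroup G × X), IsRotFam σ R →
          ∀ (W : Set X) (N : Subgroup G) (V : Set X),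
            W.Nonempty → IsExtWindmill δ R W N V →
            ∀ A : Set X,
              A = { v | v ∈ apices R ∧ v ∉ V ∧ infDist v W ≤ 3 * σ / 10 } →
              A.Nonempty →
              ∀ S : Set X, S = hull δ (W ∪ A) →
                ∀ (m : ℕ) (h : ℕ → G) (u : G) (P : ℕ → Subgroup G × X),
                  u ∈ N ⊔ rotSub R V →
                  (∀ i : ℕ, 1 ≤ i → i ≤ m →
                    P i ∈ R ∧ (P i).2 ∈ A ∧ h i ∈ (P i).1 ∧ h i ≠ 1) →
                  (∀ i : ℕ, 1 ≤ i → i + 1 ≤ m → (P i).2 ≠ (P (i + 1)).2) →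
                  ∀ g : G, g = ((List.range m).map fun i => h (i + 1)).prod * u →
                  ∀ y ∈ S, ∀ y' ∈ S,
                    ∃ ys : ℕ → X, ys 0 = y ∧ ys (m + 1) = g • y' ∧
                      (∀ i : ℕ, 1 ≤ i → i ≤ m + 1 →
                        ∃ gi ∈ (N ⊔ rotSub R V) ⊔ rotSub R A,
                          gi⁻¹ • ys (i - 1) ∈ S ∧ gi⁻¹ • ys i ∈ S) ∧
                      (∀ i : ℕ, 1 ≤ i → i + 1 ≤ m → σ ≤ dist (ys (i + 1)) (ys i)) ∧
                      (∀ i j k : ℕ, 1 ≤ i → i ≤ j → j ≤ k → k ≤ m →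
                        gp (ys j) (ys i) (ys k) ≤ 110 * δ) ∧
                      (∀ x : X, ∃ i : ℕ, i ≤ m ∧
                        gp x (ys (i + 1)) (ys i) ≤ gp x y (g • y') + 218 * δ) := by
  classical
  refine ⟨1000 * δ, by linarith, ?_⟩
  intro X _ G _ _ hiso hyp _hQGS σ hσ R hRF W N V hW hWM A hA _hAne S hS m h u P hu hP hAdj g hg y hy y' hy'
  have hσδ : 1000 * δ ≤ σ := hσ
  have hσ0 : 0 < σ := by linarith
  obtain ⟨_, hR1, hR2, hR3⟩ := hRF
  obtain ⟨_hVsub, _hQC, hWinv, hVinv, hW3, _hFree⟩ := hWM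
  -- basic isometry facts
  have hdist : ∀ (l : G) (a b : X), dist (l • a) (l • b) = dist a b := fun l a b =>
    (hiso l).dist_eq a b
  have hgp_smul : ∀ (l : G) (a b c : X), gp (l • a) (l • b) (l • c) = gp a b c := by
    intro l a b c
    simp only [gp, hdist]
  -- unpacking A
  have hAmem : ∀ v ∈ A, (∃ Q ∈ R, Q.2 = v) ∧ v ∉ V ∧ infDist v W ≤ 3 * σ / 10 := by
    intro v hv
    rw [hA] at hv
    obtain ⟨h1, h2, h3⟩ := hv
    obtain ⟨Q, hQ, hQ2⟩ := h1
    exact ⟨⟨Q, hQ, hQ2⟩, h2, h3⟩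
  have hfix : ∀ Q : Subgroup G × X, Q ∈ R → ∀ hh : G, hh ∈ Q.1 → hh ≠ 1 → hh • Q.2 = Q.2 := by
    intro Q hQ hh hhH hne
    have h0 : dist Q.2 Q.2 ≤ σ / 10 := by rw [dist_self]; linarith
    have hh1 := hR1 Q hQ Q.2 h0 hh hhH hne
    rw [dist_self, mul_zero] at hh1
    exact dist_eq_zero.mp hh1
  have hsep : ∀ Q ∈ R, ∀ Q' ∈ R, Q.2 ≠ Q'.2 → σ ≤ dist Q.2 Q'.2 := by
    intro Q hQ Q' hQ' hne
    exact hR2 Q hQ Q' hQ' (fun he => hne (by rw [he]))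
  have hgetW : ∀ v ∈ A, ∃ w ∈ W, dist v w ≤ 3 * σ / 10 + δ := by
    intro v hv
    have h3 := (hAmem v hv).2.2
    have hlt : infDist v W < 3 * σ / 10 + δ := by linarith
    obtain ⟨w, hw, hd⟩ := (Metric.infDist_lt_iff hW).mp hlt
    exact ⟨w, hw, hd.le⟩
  -- W ∪ A ⊆ S
  have hWA_S : ∀ z ∈ W ∪ A, z ∈ S := by
    intro z hz
    rw [hS]
    refine ⟨0, 0, fun _ => z, le_refl 0, ?_, hz, hz, ⟨0, ⟨le_refl 0, le_refl 0⟩, rfl⟩⟩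
    intro t ht t' ht'
    have h1 : t = 0 := le_antisymm ht.2 ht.1
    have h2 : t' = 0 := le_antisymm ht'.2 ht'.1
    subst h1; subst h2
    constructor
    · simp
    · simp [dist_self]; linarith
  -- invariance of A and S under L
  have hA_inv : ∀ l ∈ N ⊔ rotSub R V, ∀ v ∈ A, l • v ∈ A := by
    intro l hl v hv
    obtain ⟨⟨Q, hQR, hQ2⟩, hnV, hid⟩ := hAmem v hv
    rw [hA]
    refine ⟨?_, ?_, ?_⟩
    · exact ⟨(Subgroup.map (MulAut.conj l).toMonoidHom Q.1, l • Q.2), hR3 l Q hQR,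
        by simp only; rw [hQ2]⟩
    · intro hmem
      have hvv := hVinv l⁻¹ (inv_mem hl) (l • v) hmem
      rw [inv_smul_smul] at hvv
      exact hnV hvv
    · refine le_of_forall_pos_le_add ?_
      intro ε hε
      have hlt : infDist v W < 3 * σ / 10 + ε := by linarith
      obtain ⟨w, hwW, hwd⟩ := (Metric.infDist_lt_iff hW).mp hlt
      have h1 : infDist (l • v) W ≤ dist (l • v) (l • w) :=
        Metric.infDist_le_dist_of_mem (hWinv l hl w hwW)
      rw [hdist] at h1
      linarith
  have hWA_inv : ∀ l ∈ N ⊔ rotSub R V, ∀ z ∈ W ∪ A, l • z ∈ W ∪ A := by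
    intro l hl z hz
    rcases hz with hz | hz
    · exact Or.inl (hWinv l hl z hz)
    · exact Or.inr (hA_inv l hl z hz)
  have hS_inv : ∀ l ∈ N ⊔ rotSub R V, ∀ s ∈ S, l • s ∈ S := by
    intro l hl s hs
    rw [hS] at hs ⊢
    obtain ⟨a, b, γ, hab, hqg, h1, h2, θ, hθ, hγθ⟩ := hs
    refine ⟨a, b, fun t => l • γ t, hab, ?_, hWA_inv l hl _ h1, hWA_inv l hl _ h2,
      θ, hθ, by show l • γ θ = l • s; rw [hγθ]⟩
    intro t ht t' ht'
    have := hqg t ht t' ht'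
    simpa [hdist] using this
  -- B1 : products of W∪A-points against rotated W∪A-points at an apex of A
  have hB1W : ∀ Q : Subgroup G × X, Q ∈ R → Q.2 ∈ A → ∀ hh : G, hh ∈ Q.1 → hh ≠ 1 →
      ∀ c ∈ W ∪ A, ∀ p ∈ W, gp Q.2 c (hh • p) ≤ 101 * δ := by
    intro Q hQR hQA hh hhH hne1 c hc p hpW
    have hVnot : Q.2 ∉ V := (hAmem _ hQA).2.1
    rcases hc with hcW | hcA
    · have := hW3 Q hQR hVnot hh hhH hne1 c hcW p hpW
      linarith
    · by_cases hceq : c = Q.2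
      · rw [hceq, gp_self_left']
        linarith
      · obtain ⟨⟨Qc, hQcR, hQc2⟩, _, _⟩ := hAmem c hcA
        obtain ⟨wc, hwcW, hwcd⟩ := hgetW c hcA
        have hsepc : σ ≤ dist c Q.2 := by
          have := hsep Qc hQcR Q hQR (by rw [hQc2]; exact hceq)
          rwa [hQc2] at this
        have hge : dist c Q.2 - dist c wc ≤ gp Q.2 c wc := gp_ge' _ _ _
        have h100 : gp Q.2 wc (hh • p) ≤ 100 * δ := hW3 Q hQR hVnot hh hhH hne1 wc hwcW p hpW
        have hyz : 100 * δ + δ < gp Q.2 wc c := by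
          rw [gp_comm']
          linarith
        have hsm := gp_small hyp (t := Q.2) (x := hh • p) (y := wc) (z := c)
          (by rw [gp_comm']; exact h100) hyz
        rw [gp_comm']
        linarith
  have hB1 : ∀ Q : Subgroup G × X, Q ∈ R → Q.2 ∈ A → ∀ hh : G, hh ∈ Q.1 → hh ≠ 1 →
      ∀ c ∈ W ∪ A, ∀ p ∈ W ∪ A, gp Q.2 c (hh • p) ≤ 102 * δ := by
    intro Q hQR hQA hh hhH hne1 c hc p hp
    rcases hp with hpW | hpA
    · have := hB1W Q hQR hQA hh hhH hne1 c hc p hpW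
      linarith
    · by_cases hpeq : p = Q.2
      · rw [hpeq, hfix Q hQR hh hhH hne1, gp_self_right']
        linarith
      · obtain ⟨⟨Qp, hQpR, hQp2⟩, _, _⟩ := hAmem p hpA
        obtain ⟨wp, hwpW, hwpd⟩ := hgetW p hpA
        have h101 : gp Q.2 c (hh • wp) ≤ 101 * δ := hB1W Q hQR hQA hh hhH hne1 c hc wp hwpW
        have hsepp : σ ≤ dist p Q.2 := by
          have := hsep Qp hQpR Q hQR (by rw [hQp2]; exact hpeq)
          rwa [hQp2] at this
        have hfixQ : hh • Q.2 = Q.2 := hfix Q hQR hh hhH hne1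
        have htr : gp Q.2 (hh • wp) (hh • p) = gp Q.2 wp p := by
          conv_lhs => rw [← hfixQ]
          exact hgp_smul hh Q.2 wp p
        have hge : dist p Q.2 - dist p wp ≤ gp Q.2 p wp := gp_ge' _ _ _
        have hyz : 101 * δ + δ < gp Q.2 (hh • wp) (hh • p) := by
          rw [htr, gp_comm']
          linarith
        have hsm := gp_small hyp h101 hyz
        linarith
  -- LG : the "large product" lemma
  have hLG : ∀ Q : Subgroup G × X, Q ∈ R → Q.2 ∈ A →
      ∀ Q' : Subgroup G × X, Q' ∈ R → Q'.2 ∈ A → Q.2 ≠ Q'.2 →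
      ∀ Tl : X, (∀ c ∈ W ∪ A, gp Q'.2 c Tl ≤ 106 * δ) →
      ∀ w' ∈ W, dist Q'.2 w' ≤ 3 * σ / 10 + δ →
      4 * σ / 10 - 108 * δ ≤ gp Q.2 w' Tl := by
    intro Q hQR hQA Q' hQR' hQA' hne Tl hctrl w' hw'W hw'd
    obtain ⟨w, hwW, hwd⟩ := hgetW Q.2 hQA
    have l1 : gp Q'.2 Q.2 Tl ≤ gp Q'.2 w Tl + dist Q.2 w := gp_lip' _ _ _ _
    have l2 : gp Q'.2 w Tl ≤ 106 * δ := hctrl w (Or.inl hwW)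
    have l3 : gp Q.2 Q'.2 Tl + gp Q'.2 Q.2 Tl = dist Q.2 Q'.2 := gp_add' _ _ _
    have l4 : σ ≤ dist Q.2 Q'.2 := hsep Q hQR Q' hQR' hne
    have l5 : gp Q.2 Q'.2 Tl ≤ gp Q.2 w' Tl + dist Q'.2 w' := gp_lip' _ _ _ _
    linarith
  -- STEP : the inductive step along a chain of rotations
  have hSTEP : ∀ Q : Subgroup G × X, Q ∈ R → Q.2 ∈ A →
      ∀ Q' : Subgroup G × X, Q' ∈ R → Q'.2 ∈ A → Q.2 ≠ Q'.2 →
      ∀ hh : G, hh ∈ Q.1 → hh ≠ 1 →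
      ∀ Tl : X, (∀ c ∈ W ∪ A, gp Q'.2 c Tl ≤ 106 * δ) →
      ∀ c ∈ W ∪ A, gp Q.2 c (hh • Tl) ≤ 106 * δ := by
    intro Q hQR hQA Q' hQR' hQA' hne hh hhH hne1 Tl hctrl c hc
    obtain ⟨w', hw'W, hw'd⟩ := hgetW Q'.2 hQA'
    have hlarge := hLG Q hQR hQA Q' hQR' hQA' hne Tl hctrl w' hw'W hw'd
    have hsmall1 := hB1 Q hQR hQA hh hhH hne1 c hc w' (Or.inl hw'W)
    have hfixQ : hh • Q.2 = Q.2 := hfix Q hQR hh hhH hne1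
    have htr : gp Q.2 (hh • w') (hh • Tl) = gp Q.2 w' Tl := by
      conv_lhs => rw [← hfixQ]
      exact hgp_smul hh Q.2 w' Tl
    have hsm := gp_small hyp hsmall1 (by rw [htr]; linarith)
    linarith
  -- points of S are δ/2-between two points of W ∪ A
  have hSfact : ∀ τ ∈ S, ∃ p₁, p₁ ∈ W ∪ A ∧ ∃ p₂, p₂ ∈ W ∪ A ∧ gp τ p₁ p₂ ≤ δ / 2 := by
    intro τ hτ
    rw [hS] at hτ
    obtain ⟨a, b, γ, hab, hqg, h1, h2, θ, hθ, hγθ⟩ := hτ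
    exact ⟨γ a, h1, γ b, h2, hγθ ▸ gp_qg hab hqg hθ⟩
  -- BS : base case with an S-tail
  have hBS : ∀ Q : Subgroup G × X, Q ∈ R → Q.2 ∈ A → ∀ hh : G, hh ∈ Q.1 → hh ≠ 1 →
      ∀ τ ∈ S, ∀ c ∈ W ∪ A, gp Q.2 c (hh • τ) ≤ 106 * δ := by
    intro Q hQR hQA hh hhH hne1 τ hτ c hc
    obtain ⟨p₁, hp₁, p₂, hp₂, hgpτ⟩ := hSfact τ hτ
    have hgpτ' : gp (hh • τ) (hh • p₁) (hh • p₂) ≤ δ / 2 := by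
      rw [hgp_smul]; exact hgpτ
    have hsp := gp_sp (v := Q.2) (b := c) hδ hyp (by linarith) hgpτ'
    have e1 : gp Q.2 (hh • p₁) c ≤ 102 * δ := by
      rw [gp_comm']; exact hB1 Q hQR hQA hh hhH hne1 c hc p₁ hp₁
    have e2 : gp Q.2 (hh • p₂) c ≤ 102 * δ := by
      rw [gp_comm']; exact hB1 Q hQR hQA hh hhH hne1 c hc p₂ hp₂
    have hm := max_le e1 e2
    rw [gp_comm']
    linarith
  -- the group elements gw n = h 1 * ... * h n
  obtain ⟨gw, hgw0, hgwS, hgwm⟩ :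
      ∃ gw : ℕ → G, gw 0 = 1 ∧ (∀ n, gw (n + 1) = gw n * h (n + 1)) ∧ gw m * u = g := by
    refine ⟨fun n => ((List.range n).map fun i => h (i + 1)).prod, by simp, ?_, ?_⟩
    · intro n
      simp [List.range_succ]
    · exact hg.symm
  have hpeel : ∀ j : ℕ, 1 ≤ j → ∀ z : X, (gw (j - 1))⁻¹ • z = h j • ((gw j)⁻¹ • z) := by
    intro j hj z
    have hgj : gw j = gw (j - 1) * h j := by
      have := hgwS (j - 1)
      rwa [show j - 1 + 1 = j from by omega] at this
    rw [hgj, mul_inv_rev, mul_smul, smul_inv_smul]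
  have hrotA : ∀ i : ℕ, 1 ≤ i → i ≤ m → h i ∈ rotSub R A := by
    intro i h1 h2
    obtain ⟨hPR, hPA, hPH, _⟩ := hP i h1 h2
    have hle : (P i).1 ≤ rotSub R A := by
      have hmem : P i ∈ {q ∈ R | q.2 ∈ A} := ⟨hPR, hPA⟩
      exact le_iSup₂ (f := fun (p : Subgroup G × X) (_ : p ∈ {q ∈ R | q.2 ∈ A}) => p.1)
        (P i) hmem
    exact hle hPH
  have hgwmem : ∀ n : ℕ, n ≤ m → gw n ∈ rotSub R A := by
    intro n
    induction n with
    | zero => intro _; rw [hgw0]; exact Subgroup.one_mem _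
    | succ k ih =>
      intro hk
      rw [hgwS k]
      exact Subgroup.mul_mem _ (ih (by omega)) (hrotA (k + 1) (by omega) hk)
  -- the points ys
  obtain ⟨ys, hys0, hysj, hysm1⟩ :
      ∃ ys : ℕ → X, ys 0 = y ∧ (∀ j : ℕ, 1 ≤ j → j ≤ m → ys j = gw (j - 1) • (P j).2) ∧
        ys (m + 1) = g • y' := by
    refine ⟨fun j => if j = 0 then y else if j ≤ m then gw (j - 1) • (P j).2 else g • y',
      by simp, ?_, ?_⟩
    · intro j h1 h2
      dsimp only
      rw [if_neg (by omega), if_pos h2]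
    · dsimp only
      rw [if_neg (by omega), if_neg (by omega)]
  have hvtx1 : ∀ l : ℕ, 1 ≤ l → l ≤ m → (gw (l - 1))⁻¹ • ys l = (P l).2 := by
    intro l h1 h2
    rw [hysj l h1 h2, inv_smul_smul]
  have hvtx2 : ∀ l : ℕ, 1 ≤ l → l ≤ m → (gw l)⁻¹ • ys l = (P l).2 := by
    intro l h1 h2
    obtain ⟨hPR, hPA, hPH, hne1⟩ := hP l h1 h2
    have hgl : gw l = gw (l - 1) * h l := by
      have := hgwS (l - 1)
      rwa [show l - 1 + 1 = l from by omega] at this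
    rw [hysj l h1 h2, hgl, mul_inv_rev, mul_smul, inv_smul_smul, inv_smul_eq_iff]
    exact (hfix (P l) hPR (h l) hPH hne1).symm
  -- forward control towards g•y'
  have hCFaux : ∀ d j : ℕ, 1 ≤ j → j + d = m → ∀ c ∈ W ∪ A,
      gp (P j).2 c ((gw (j - 1))⁻¹ • (g • y')) ≤ 106 * δ := by
    intro d
    induction d with
    | zero =>
      intro j hj1 hjm c hc
      have hjm' : j = m := by omega
      subst hjm'
      obtain ⟨hPR, hPA, hPH, hne1⟩ := hP j hj1 (le_refl j)
      have hrw : (gw (j - 1))⁻¹ • (g • y') = h j • (u • y') := by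
        rw [hpeel j hj1, ← hgwm, mul_smul, inv_smul_smul]
      rw [hrw]
      exact hBS (P j) hPR hPA (h j) hPH hne1 (u • y') (hS_inv u hu y' hy') c hc
    | succ d ih =>
      intro j hj1 hjm c hc
      have hjm1 : j + 1 ≤ m := by omega
      obtain ⟨hPR, hPA, hPH, hne1⟩ := hP j hj1 (by omega)
      obtain ⟨hPR', hPA', _, _⟩ := hP (j + 1) (by omega) hjm1
      have hctrl : ∀ c' ∈ W ∪ A, gp (P (j + 1)).2 c' ((gw j)⁻¹ • (g • y')) ≤ 106 * δ :=
        fun c' hc' => ih (j + 1) (by omega) (by omega) c' hc'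
      rw [hpeel j hj1]
      exact hSTEP (P j) hPR hPA (P (j + 1)) hPR' hPA' (hAdj j hj1 hjm1) (h j) hPH hne1
        _ hctrl c hc
  have hCF : ∀ j : ℕ, 1 ≤ j → j ≤ m → ∀ c ∈ W ∪ A,
      gp (P j).2 c ((gw (j - 1))⁻¹ • (g • y')) ≤ 106 * δ := by
    intro j hj1 hjm
    exact hCFaux (m - j) j hj1 (by omega)
  -- forward control towards an intermediate apex
  have hCZaux : ∀ k : ℕ, 1 ≤ k → k ≤ m → ∀ d j : ℕ, 1 ≤ j → j + d = k → ∀ c ∈ W ∪ A,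
      gp (P j).2 c ((gw (j - 1))⁻¹ • ys k) ≤ 106 * δ := by
    intro k hk1 hkm d
    induction d with
    | zero =>
      intro j hj1 hjk c hc
      have hjk' : j = k := by omega
      subst hjk'
      rw [hvtx1 j hj1 hkm, gp_self_right']
      linarith
    | succ d ih =>
      intro j hj1 hjk c hc
      have hjm1 : j + 1 ≤ m := by omega
      obtain ⟨hPR, hPA, hPH, hne1⟩ := hP j hj1 (by omega)
      obtain ⟨hPR', hPA', _, _⟩ := hP (j + 1) (by omega) hjm1
      have hctrl : ∀ c' ∈ W ∪ A, gp (P (j + 1)).2 c' ((gw j)⁻¹ • ys k) ≤ 106 * δ :=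
        fun c' hc' => ih (j + 1) (by omega) (by omega) c' hc'
      rw [hpeel j hj1]
      exact hSTEP (P j) hPR hPA (P (j + 1)) hPR' hPA' (hAdj j hj1 hjm1) (h j) hPH hne1
        _ hctrl c hc
  -- backward control towards y
  have hCB0 : ∀ l : ℕ, 1 ≤ l → l ≤ m → ∀ c ∈ W ∪ A,
      gp (P l).2 c ((gw l)⁻¹ • y) ≤ 106 * δ := by
    intro l
    induction l with
    | zero => intro h0; omega
    | succ l ih =>
      intro _ hlm c hc
      by_cases hl0 : l = 0
      · subst hl0
        obtain ⟨hPR, hPA, hPH, hne1⟩ := hP 1 (le_refl 1) hlm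
        have hrw : (gw 1)⁻¹ • y = (h 1)⁻¹ • y := by
          have e : gw 1 = h 1 := by
            have := hgwS 0
            rwa [hgw0, one_mul] at this
          rw [e]
        rw [hrw]
        exact hBS (P 1) hPR hPA ((h 1)⁻¹) (inv_mem hPH) (inv_ne_one.mpr hne1) y hy c hc
      · have hl1 : 1 ≤ l := by omega
        have hlm' : l ≤ m := by omega
        have hctrl := ih hl1 hlm'
        obtain ⟨hPR, hPA, hPH, hne1⟩ := hP (l + 1) (by omega) hlm
        obtain ⟨hPR', hPA', _, _⟩ := hP l hl1 hlm'
        have hnev : (P (l + 1)).2 ≠ (P l).2 := (hAdj l hl1 hlm).symm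
        have hrw : (gw (l + 1))⁻¹ • y = (h (l + 1))⁻¹ • ((gw l)⁻¹ • y) := by
          rw [hgwS l, mul_inv_rev, mul_smul]
        rw [hrw]
        exact hSTEP (P (l + 1)) hPR hPA (P l) hPR' hPA' hnev ((h (l + 1))⁻¹)
          (inv_mem hPH) (inv_ne_one.mpr hne1) _ hctrl c hc
  -- backward control towards an intermediate apex
  have hCBi : ∀ i : ℕ, 1 ≤ i → i ≤ m → ∀ l : ℕ, i ≤ l → l ≤ m → ∀ c ∈ W ∪ A,
      gp (P l).2 c ((gw l)⁻¹ • ys i) ≤ 106 * δ := by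
    intro i hi1 him l
    induction l with
    | zero => intro h0 _; omega
    | succ l ih =>
      intro hil hlm c hc
      by_cases hl : l + 1 = i
      · rw [hl, hvtx2 i hi1 him, gp_self_right']
        linarith
      · have hil' : i ≤ l := by omega
        have hl1 : 1 ≤ l := by omega
        have hlm' : l ≤ m := by omega
        have hctrl := ih hil' hlm'
        obtain ⟨hPR, hPA, hPH, hne1⟩ := hP (l + 1) (by omega) hlm
        obtain ⟨hPR', hPA', _, _⟩ := hP l hl1 hlm'
        have hnev : (P (l + 1)).2 ≠ (P l).2 := (hAdj l hl1 hlm).symm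
        have hrw : (gw (l + 1))⁻¹ • ys i = (h (l + 1))⁻¹ • ((gw l)⁻¹ • ys i) := by
          rw [hgwS l, mul_inv_rev, mul_smul]
        rw [hrw]
        exact hSTEP (P (l + 1)) hPR hPA (P l) hPR' hPA' hnev ((h (l + 1))⁻¹)
          (inv_mem hPH) (inv_ne_one.mpr hne1) _ hctrl c hc
  -- left-control providers and right assemblies
  have hlok_S : ∀ j : ℕ, 1 ≤ j → j ≤ m → ∀ aa ∈ S, ∀ p ∈ W ∪ A,
      gp (P j).2 aa (h j • p) ≤ 106 * δ := by
    intro j hj1 hjm aa haS p hp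
    obtain ⟨hPR, hPA, hPH, hne1⟩ := hP j hj1 hjm
    obtain ⟨p₁, hp₁, p₂, hp₂, hgpa⟩ := hSfact aa haS
    have hsp := gp_sp (v := (P j).2) (b := h j • p) hδ hyp (by linarith) hgpa
    have e1 := hB1 (P j) hPR hPA (h j) hPH hne1 p₁ hp₁ p hp
    have e2 := hB1 (P j) hPR hPA (h j) hPH hne1 p₂ hp₂ p hp
    have hm := max_le e1 e2
    linarith
  have hlok_word : ∀ j : ℕ, 2 ≤ j → j ≤ m → ∀ aa : X,
      (∀ c ∈ W ∪ A, gp (P (j - 1)).2 c aa ≤ 106 * δ) →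
      ∀ p ∈ W ∪ A, gp (P j).2 aa (h j • p) ≤ 103 * δ := by
    intro j hj2 hjm aa hctrl p hp
    obtain ⟨hPR, hPA, hPH, hne1⟩ := hP j (by omega) hjm
    obtain ⟨hPR', hPA', _, _⟩ := hP (j - 1) (by omega) (by omega)
    have hnev : (P j).2 ≠ (P (j - 1)).2 := by
      have := hAdj (j - 1) (by omega) (by omega)
      rw [show j - 1 + 1 = j from by omega] at this
      exact this.symm
    obtain ⟨w', hw'W, hw'd⟩ := hgetW (P (j - 1)).2 hPA'
    have hlarge := hLG (P j) hPR hPA (P (j - 1)) hPR' hPA' hnev aa hctrl w' hw'W hw'd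
    have h102 := hB1 (P j) hPR hPA (h j) hPH hne1 w' (Or.inl hw'W) p hp
    have hsm := gp_small hyp (t := (P j).2) (x := h j • p) (y := w') (z := aa)
      (s := 102 * δ) (by rw [gp_comm']; exact h102) (by linarith)
    rw [gp_comm']
    linarith
  have hTR0 : ∀ j : ℕ, 1 ≤ j → j + 1 ≤ m → ∀ (aa : X) (κ : ℝ), κ ≤ 106 →
      (∀ p ∈ W ∪ A, gp (P j).2 aa (h j • p) ≤ κ * δ) →
      ∀ Tl : X, (∀ c ∈ W ∪ A, gp (P (j + 1)).2 c Tl ≤ 106 * δ) →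
      gp (P j).2 aa (h j • Tl) ≤ κ * δ + δ := by
    intro j hj1 hj1m aa κ hκ hlok Tl hctrl
    obtain ⟨hPR, hPA, hPH, hne1⟩ := hP j hj1 (by omega)
    obtain ⟨hPR', hPA', _, _⟩ := hP (j + 1) (by omega) hj1m
    obtain ⟨w', hw'W, hw'd⟩ := hgetW (P (j + 1)).2 hPA'
    have hlarge := hLG (P j) hPR hPA (P (j + 1)) hPR' hPA' (hAdj j hj1 hj1m) Tl hctrl
      w' hw'W hw'd
    have hfixj : h j • (P j).2 = (P j).2 := hfix (P j) hPR (h j) hPH hne1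
    have htr : gp (P j).2 (h j • w') (h j • Tl) = gp (P j).2 w' Tl := by
      conv_lhs => rw [← hfixj]
      exact hgp_smul (h j) (P j).2 w' Tl
    have hκδ : κ * δ ≤ 106 * δ := mul_le_mul_of_nonneg_right hκ hδ.le
    exact gp_small hyp (hlok w' (Or.inl hw'W)) (by rw [htr]; linarith)
  have hTR1 : ∀ j : ℕ, 1 ≤ j → j ≤ m → ∀ (aa : X) (κ : ℝ),
      (∀ p ∈ W ∪ A, gp (P j).2 aa (h j • p) ≤ κ * δ) →
      ∀ τ ∈ S, gp (P j).2 aa (h j • τ) ≤ κ * δ + 4 * δ := by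
    intro j hj1 hjm aa κ hlok τ hτ
    obtain ⟨p₁, hp₁, p₂, hp₂, hgpτ⟩ := hSfact τ hτ
    have hgpτ' : gp (h j • τ) (h j • p₁) (h j • p₂) ≤ δ / 2 := by
      rw [hgp_smul]; exact hgpτ
    have hsp := gp_sp (v := (P j).2) (b := aa) hδ hyp (by linarith) hgpτ'
    have e1 : gp (P j).2 (h j • p₁) aa ≤ κ * δ := by
      rw [gp_comm']; exact hlok p₁ hp₁
    have e2 : gp (P j).2 (h j • p₂) aa ≤ κ * δ := by
      rw [gp_comm']; exact hlok p₂ hp₂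
    have hm := max_le e1 e2
    rw [gp_comm']
    linarith
  -- translation of Gromov products based at ys j
  have htrans3 : ∀ j : ℕ, 1 ≤ j → j ≤ m → ∀ b c : X,
      gp (ys j) b c = gp (P j).2 ((gw (j - 1))⁻¹ • b) ((gw (j - 1))⁻¹ • c) := by
    intro j h1 h2 b c
    have e := hgp_smul ((gw (j - 1))⁻¹) (ys j) b c
    rw [hvtx1 j h1 h2] at e
    exact e.symm
  refine ⟨ys, hys0, hysm1, ?_, ?_, ?_, ?_⟩
  · -- (i) : companions in L'
    intro i hi1 him1
    by_cases him : i ≤ m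
    · refine ⟨gw (i - 1), ?_, ?_, ?_⟩
      · exact Subgroup.mem_sup_right (hgwmem (i - 1) (by omega))
      · by_cases hi1' : i = 1
        · subst hi1'
          have : (gw 0)⁻¹ • ys 0 = y := by rw [hys0, hgw0, inv_one, one_smul]
          rw [this]
          exact hy
        · have hi2 : 2 ≤ i := by omega
          obtain ⟨hPR, hPA, hPH, hne1⟩ := hP (i - 1) (by omega) (by omega)
          have hrw : (gw (i - 1))⁻¹ • ys (i - 1) = (P (i - 1)).2 := by
            rw [hysj (i - 1) (by omega) (by omega)]
            have hgl : gw (i - 1) = gw (i - 1 - 1) * h (i - 1) := by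
              have := hgwS (i - 1 - 1)
              rwa [show i - 1 - 1 + 1 = i - 1 from by omega] at this
            rw [hgl, mul_inv_rev, mul_smul, inv_smul_smul, inv_smul_eq_iff]
            exact (hfix (P (i - 1)) hPR (h (i - 1)) hPH hne1).symm
          rw [hrw]
          exact hWA_S _ (Or.inr hPA)
      · have hrw : (gw (i - 1))⁻¹ • ys i = (P i).2 := hvtx1 i hi1 him
        rw [hrw]
        exact hWA_S _ (Or.inr (hP i hi1 him).2.1)
    · have hieq : i = m + 1 := by omega
      subst hieq
      refine ⟨g, ?_, ?_, ?_⟩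
      · rw [← hgwm]
        exact Subgroup.mul_mem _ (Subgroup.mem_sup_right (hgwmem m (le_refl m)))
          (Subgroup.mem_sup_left hu)
      · by_cases hm0 : m = 0
        · have hgu : g = u := by rw [← hgwm, hm0, hgw0, one_mul]
          have hrw : g⁻¹ • ys (m + 1 - 1) = u⁻¹ • y := by
            rw [show m + 1 - 1 = 0 from by omega, hys0, hgu]
          rw [hrw]
          exact hS_inv u⁻¹ (inv_mem hu) y hy
        · have hm1 : 1 ≤ m := by omega
          obtain ⟨hPR, hPA, hPH, hne1⟩ := hP m hm1 (le_refl m)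
          have hrw : g⁻¹ • ys (m + 1 - 1) = u⁻¹ • (P m).2 := by
            rw [show m + 1 - 1 = m from by omega, ← hgwm, mul_inv_rev, mul_smul,
              hvtx2 m hm1 (le_refl m)]
          rw [hrw]
          exact hWA_S _ (Or.inr (hA_inv u⁻¹ (inv_mem hu) (P m).2 hPA))
      · have : g⁻¹ • ys (m + 1) = y' := by rw [hysm1, inv_smul_smul]
        rw [this]
        exact hy'
  · -- (ii) : separation
    intro i hi1 hi1m
    have e1 := hysj i hi1 (by omega)
    have e2 := hysj (i + 1) (by omega) hi1m
    obtain ⟨hPR, hPA, hPH, hne1⟩ := hP i hi1 (by omega)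
    obtain ⟨hPR', hPA', _, _⟩ := hP (i + 1) (by omega) hi1m
    have hfixi : h i • (P i).2 = (P i).2 := hfix (P i) hPR (h i) hPH hne1
    have hgi : gw i = gw (i - 1) * h i := by
      have := hgwS (i - 1)
      rwa [show i - 1 + 1 = i from by omega] at this
    have hrw : dist (ys (i + 1)) (ys i) = dist (P (i + 1)).2 (P i).2 := by
      rw [e2, e1]
      rw [show i + 1 - 1 = i from by omega, hgi, mul_smul, hdist]
      conv_lhs => rw [← hfixi]
      rw [hdist]
    rw [hrw]
    exact hsep (P (i + 1)) hPR' (P i) hPR (hAdj i hi1 hi1m).symm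
  · -- (iii) : alignment
    intro i j k hi1 hij hjk hkm
    rcases eq_or_lt_of_le hij with rfl | hij'
    · rw [gp_self_left']
      linarith
    rcases eq_or_lt_of_le hjk with rfl | hjk'
    · rw [gp_self_right']
      linarith
    have hj1 : 1 ≤ j := by omega
    have hjm : j ≤ m := by omega
    have hj1k : j + 1 ≤ k := hjk'
    have hj1m : j + 1 ≤ m := by omega
    rw [htrans3 j hj1 hjm (ys i) (ys k), hpeel j hj1 (ys k)]
    have hctrlR : ∀ c ∈ W ∪ A, gp (P (j + 1)).2 c ((gw j)⁻¹ • ys k) ≤ 106 * δ := by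
      intro c hc
      exact hCZaux k (by omega) hkm (k - (j + 1)) (j + 1) (by omega) (by omega) c hc
    by_cases hieq : i = j - 1
    · obtain ⟨hPR', hPA', _, _⟩ := hP (j - 1) (by omega) (by omega)
      have hrwL : (gw (j - 1))⁻¹ • ys i = (P (j - 1)).2 := by
        rw [hieq]
        exact hvtx2 (j - 1) (by omega) (by omega)
      rw [hrwL]
      have hlokm : ∀ p ∈ W ∪ A, gp (P j).2 (P (j - 1)).2 (h j • p) ≤ 102 * δ := by
        intro p hp
        obtain ⟨hPR, hPA, hPH, hne1⟩ := hP j hj1 hjm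
        exact hB1 (P j) hPR hPA (h j) hPH hne1 (P (j - 1)).2 (Or.inr hPA') p hp
      have := hTR0 j hj1 hj1m _ 102 (by norm_num) hlokm _ hctrlR
      linarith
    · have hj2 : 2 ≤ j := by omega
      have hctrlL : ∀ c ∈ W ∪ A, gp (P (j - 1)).2 c ((gw (j - 1))⁻¹ • ys i) ≤ 106 * δ :=
        fun c hc => hCBi i hi1 (by omega) (j - 1) (by omega) (by omega) c hc
      have hlokw := hlok_word j hj2 hjm _ hctrlL
      have := hTR0 j hj1 hj1m _ 103 (by norm_num) hlokw _ hctrlR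
      linarith
  · -- (iv)
    intro xx
    by_cases hm0 : m = 0
    · refine ⟨0, by omega, ?_⟩
      rw [show (0 : ℕ) + 1 = m + 1 from by omega, hysm1, hys0, gp_comm']
      linarith
    by_cases hm1 : m = 1
    · have Hh := hyp (ys 0) (ys 1) (ys (m + 1)) xx
      rcases le_total (gp xx (ys 0) (ys 1)) (gp xx (ys 1) (ys (m + 1))) with hmm | hmm
      · rw [min_eq_left hmm] at Hh
        refine ⟨0, by omega, ?_⟩
        have hgoal : gp xx (ys (0 + 1)) (ys 0) = gp xx (ys 0) (ys 1) := by
          rw [show (0 : ℕ) + 1 = 1 from rfl]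
          exact gp_comm' _ _ _
        rw [hgoal, ← hys0, ← hysm1]
        linarith
      · rw [min_eq_right hmm] at Hh
        refine ⟨1, by omega, ?_⟩
        have hgoal : gp xx (ys (1 + 1)) (ys 1) = gp xx (ys 1) (ys (m + 1)) := by
          rw [show (1 : ℕ) + 1 = m + 1 from by omega]
          exact gp_comm' _ _ _
        rw [hgoal, ← hys0, ← hysm1]
        linarith
    have hm2 : 2 ≤ m := by omega
    have hAL : ∀ j : ℕ, 1 ≤ j → j ≤ m → gp (ys j) (ys 0) (ys (m + 1)) ≤ 107 * δ := by
      intro j hj1 hjm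
      rw [htrans3 j hj1 hjm (ys 0) (ys (m + 1))]
      have hlokex : ∃ κ : ℝ, κ ≤ 106 ∧ (j = m → κ ≤ 103) ∧
          ∀ p ∈ W ∪ A, gp (P j).2 ((gw (j - 1))⁻¹ • ys 0) (h j • p) ≤ κ * δ := by
        by_cases hj2 : 2 ≤ j
        · refine ⟨103, by norm_num, fun _ => le_refl _, ?_⟩
          have hctrl : ∀ c ∈ W ∪ A, gp (P (j - 1)).2 c ((gw (j - 1))⁻¹ • ys 0) ≤ 106 * δ := by
            intro c hc
            rw [hys0]
            exact hCB0 (j - 1) (by omega) (by omega) c hc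
          exact hlok_word j hj2 hjm _ hctrl
        · have hj1' : j = 1 := by omega
          refine ⟨106, le_refl _, ?_, ?_⟩
          · intro hjm'
            exfalso
            omega
          · intro p hp
            have hrw : (gw (j - 1))⁻¹ • ys 0 = y := by
              rw [hys0, hj1']
              show (gw 0)⁻¹ • y = y
              rw [hgw0, inv_one, one_smul]
            rw [hrw]
            exact hlok_S j hj1 hjm y hy p hp
      obtain ⟨κ, hκ106, hκ103, hlokf⟩ := hlokex
      by_cases hjem : j = m
      · have hκ3 : κ ≤ 103 := hκ103 hjem
        have hrwR : (gw (j - 1))⁻¹ • ys (m + 1) = h j • (u • y') := by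
          rw [hysm1, hpeel j hj1, hjem, ← hgwm, mul_smul, inv_smul_smul]
        rw [hrwR]
        have htr1 := hTR1 j hj1 hjm _ κ hlokf (u • y') (hS_inv u hu y' hy')
        have hκδ : κ * δ ≤ 103 * δ := mul_le_mul_of_nonneg_right hκ3 hδ.le
        linarith
      · have hj1m : j + 1 ≤ m := by omega
        rw [hpeel j hj1 (ys (m + 1))]
        have hctrlR : ∀ c ∈ W ∪ A, gp (P (j + 1)).2 c ((gw j)⁻¹ • ys (m + 1)) ≤ 106 * δ := by
          intro c hc
          rw [hysm1]
          exact hCF (j + 1) (by omega) hj1m c hc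
        have htr0 := hTR0 j hj1 hj1m _ κ hκ106 hlokf _ hctrlR
        have hκδ : κ * δ ≤ 106 * δ := mul_le_mul_of_nonneg_right hκ106 hδ.le
        linarith
    have hstar : ∀ j : ℕ, 1 ≤ j → j ≤ m →
        gp (ys j) xx (ys 0) ≤ 108 * δ ∨ gp (ys j) xx (ys (m + 1)) ≤ 108 * δ := by
      intro j hj1 hjm
      have I1 := gp_ident' xx (ys j) (ys 0) (ys (m + 1))
      have I2 := gp_ident' xx (ys j) (ys (m + 1)) (ys 0)
      have c1 : gp xx (ys (m + 1)) (ys 0) = gp xx (ys 0) (ys (m + 1)) := gp_comm' _ _ _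
      have c2 : gp (ys j) (ys (m + 1)) (ys 0) = gp (ys j) (ys 0) (ys (m + 1)) := gp_comm' _ _ _
      have hal := hAL j hj1 hjm
      have Hh := hyp (ys 0) (ys j) (ys (m + 1)) xx
      rcases le_total (gp xx (ys 0) (ys j)) (gp xx (ys j) (ys (m + 1))) with hmm | hmm
      · rw [min_eq_left hmm] at Hh
        right
        have c3 : gp xx (ys 0) (ys j) = gp xx (ys j) (ys 0) := gp_comm' _ _ _
        linarith
      · rw [min_eq_right hmm] at Hh
        left
        linarith
    by_cases hall : ∀ jj : ℕ, 1 ≤ jj → jj ≤ m → gp (ys jj) xx (ys 0) ≤ 108 * δ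
    · refine ⟨m, le_refl m, ?_⟩
      have hsm := hall m (by omega) (le_refl m)
      have I := gp_ident' xx (ys m) (ys 0) (ys (m + 1))
      have n1 := gp_nonneg' (ys m) (ys 0) (ys (m + 1))
      have c := gp_comm' xx (ys (m + 1)) (ys m)
      rw [← hys0, ← hysm1]
      linarith
    · push_neg at hall
      obtain ⟨j', hj'1, hj'm, hj's⟩ := hall
      have hex : ∃ n : ℕ, 1 ≤ n ∧ n ≤ m ∧ 108 * δ < gp (ys n) xx (ys 0) :=
        ⟨j', hj'1, hj'm, hj's⟩
      obtain ⟨hf1, hfm, hfs⟩ := Nat.find_spec hex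
      have hei : gp (ys (Nat.find hex)) xx (ys (m + 1)) ≤ 108 * δ := by
        rcases hstar (Nat.find hex) hf1 hfm with hs | he
        · linarith
        · exact he
      have hsi : gp (ys (Nat.find hex - 1)) xx (ys 0) ≤ 108 * δ := by
        by_cases h0 : Nat.find hex - 1 = 0
        · rw [h0, gp_self_right']
          linarith
        · by_contra hcon
          push_neg at hcon
          exact Nat.find_min hex (by omega) ⟨by omega, by omega, hcon⟩
      refine ⟨Nat.find hex - 1, by omega, ?_⟩
      rw [show Nat.find hex - 1 + 1 = Nat.find hex from by omega]
      have I1 := gp_ident' xx (ys (Nat.find hex - 1)) (ys 0) (ys (Nat.find hex))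
      have I2 := gp_ident' xx (ys (Nat.find hex)) (ys (m + 1)) (ys 0)
      have c1 : gp xx (ys (m + 1)) (ys 0) = gp xx (ys 0) (ys (m + 1)) := gp_comm' _ _ _
      have c2 : gp xx (ys (Nat.find hex)) (ys 0) = gp xx (ys 0) (ys (Nat.find hex)) :=
        gp_comm' _ _ _
      have c3 : gp xx (ys (Nat.find hex)) (ys (Nat.find hex - 1)) =
          gp xx (ys (Nat.find hex - 1)) (ys (Nat.find hex)) := gp_comm' _ _ _
      have n1 := gp_nonneg' (ys (Nat.find hex - 1)) (ys 0) (ys (Nat.find hex))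
      have n2 := gp_nonneg' (ys (Nat.find hex)) (ys (m + 1)) (ys 0)
      rw [← hys0, ← hysm1]
      linarith
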